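/- Let C be a nodal curve with marked smooth point σ(0), fixed node R ∈ C_γ ∩ C_{γ'} with γ ≠ γ'. For each t ∈ {1,2}, if R is not a separating node of C then T¹_γ = T¹_{γ'}; if R is a separating node and W is the 1-tail terminating at R and containing σ(0), then T¹_γ and T¹_{γ'} differ exactly by the single tail W. -/

import Mathlib

open Finset

/-- A combinatorial model of a nodal curve: `V` is the set of irreducible
components, `N` the set of nodes, `ends e` the (one or two) components through
the node `e`, `gen v` the geometric genus of the component `v`, and `base` the
component containing the marked smooth point `σ(0)`. -/
structure NodalGraph where
  V : Type
  N : Type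
  [fV : Fintype V]
  [dV : DecidableEq V]
  [fN : Fintype N]
  [dN : DecidableEq N]
  ends : N → V × V
  gen : V → ℕ
  base : V

attribute [instance] NodalGraph.fV NodalGraph.dV NodalGraph.fN NodalGraph.dN

namespace NodalGraph

variable (G : NodalGraph)

/-- Two components are adjacent if some node lies on both. -/
def Adj (a b : G.V) : Prop := ∃ e, G.ends e = (a, b) ∨ G.ends e = (b, a)

/-- The set of terminal points of a subcurve `Z`, i.e. the nodes in `Z ∩ Zᶜ`. -/
def Term (Z : Finset G.V) : Finset G.N :=
  univ.filter (fun e =>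
    ((G.ends e).1 ∈ Z ∧ (G.ends e).2 ∉ Z) ∨ ((G.ends e).1 ∉ Z ∧ (G.ends e).2 ∈ Z))

/-- `k_Z`, the number of terminal points of `Z`. -/
def k (Z : Finset G.V) : ℕ := (G.Term Z).card

/-- A (nonempty) subcurve is connected. -/
def ConnSub (Z : Finset G.V) : Prop :=
  Z.Nonempty ∧ ∀ u ∈ Z, ∀ v ∈ Z,
    Relation.ReflTransGen (fun a b => a ∈ Z ∧ b ∈ Z ∧ G.Adj a b) u v

/-- The whole curve is connected. -/
def Connected : Prop := G.ConnSub univ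

/-- A tail: a proper subcurve `Z` with both `Z` and `Zᶜ` connected. -/
def IsTail (Z : Finset G.V) : Prop := Z ≠ univ ∧ G.ConnSub Z ∧ G.ConnSub Zᶜ

/-- A `m`-tail: a tail with `k_Z = m`. -/
def IsKTail (Z : Finset G.V) (m : ℕ) : Prop := G.IsTail Z ∧ G.k Z = m

/-- The node `e` lies on the component `v`. -/
def onComp (e : G.N) (v : G.V) : Prop := (G.ends e).1 = v ∨ (G.ends e).2 = v

/-- The node `e`, as a point of the curve, lies on the subcurve `Z`. -/
def nodeOn (e : G.N) (Z : Finset G.V) : Prop := (G.ends e).1 ∈ Z ∨ (G.ends e).2 ∈ Z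

/-- The subcurve `Z` crosses the node `e`: both branches of `e` lie in `Z`. -/
def crosses (Z : Finset G.V) (e : G.N) : Prop := (G.ends e).1 ∈ Z ∧ (G.ends e).2 ∈ Z

/-- `Z ≺ Z'`: strict inclusion with disjoint terminal points. -/
def prec (Z Z' : Finset G.V) : Prop := Z ⊂ Z' ∧ G.Term Z ∩ G.Term Z' = ∅

/-- The pair `(Z, Z')` is free: disjoint terminal points. -/
def free (Z Z' : Finset G.V) : Prop := G.Term Z ∩ G.Term Z' = ∅

/-- The pair `(Z, Z')` is perfect. -/
def perfect (Z Z' : Finset G.V) : Prop := Z ⊆ Z' ∨ Z' ⊆ Z ∨ Zᶜ ⊆ Z' ∨ Z' ⊆ Zᶜ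

/-- `T¹_γ`: the nested set of 1-tails containing `C_γ` and avoiding `σ(0)`. -/
def T1 (γ : G.V) : Set (Finset G.V) := { Z | G.IsKTail Z 1 ∧ γ ∈ Z ∧ G.base ∉ Z }

/-- The defining condition for the 2-tails entering `T²_{γ,γ'}`. -/
def cond2 (γ γ' : G.V) (Z : Finset G.V) : Prop :=
  G.IsKTail Z 2 ∧ γ ∈ Z ∧ γ' ∈ Z ∧ G.base ∉ Z

/-- `W 0 ≺ W 1 ≺ ⋯ ≺ W (M-1)` is the nested set `T²_{γ,γ'}` of 2-tails:
each `W t` is minimal among the 2-tails `Z ⊇ C_γ ∪ C_γ'` with `σ(0) ∈ Zᶜ`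
and `W (t-1) ≺ Z` (starting from `W_{-1} = ∅`), and the chain is maximal. -/
def IsNested2 (γ γ' : G.V) (M : ℕ) (W : ℕ → Finset G.V) : Prop :=
  (∀ t < M, Minimal (fun Z => G.cond2 γ γ' Z ∧ G.prec (if t = 0 then ∅ else W (t - 1)) Z) (W t)) ∧
  ¬ ∃ Z, G.cond2 γ γ' Z ∧ G.prec (if M = 0 then ∅ else W (M - 1)) Z

/-- The set underlying a finite chain `W 0, …, W (M-1)`. -/
def chainSet (M : ℕ) (W : ℕ → Finset G.V) : Set (Finset G.V) := { Z | ∃ t < M, W t = Z }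

/-- The defining condition for the 3-tails entering `T³_{γ,γ'}`:
3-tails that are moreover free with respect to every member of `T²_{γ,γ'}`. -/
def cond3 (γ γ' : G.V) (T2 : Set (Finset G.V)) (Z : Finset G.V) : Prop :=
  G.IsKTail Z 3 ∧ γ ∈ Z ∧ γ' ∈ Z ∧ G.base ∉ Z ∧ ∀ W ∈ T2, G.free Z W

/-- `W 0 ≺ ⋯ ≺ W (M-1)` is the nested set `T³_{γ,γ'}` of 3-tails (relative to
the set `T2` of nested 2-tails). -/
def IsNested3 (γ γ' : G.V) (T2 : Set (Finset G.V)) (M : ℕ) (W : ℕ → Finset G.V) : Prop :=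
  (∀ t < M, Minimal (fun Z => G.cond3 γ γ' T2 Z ∧ G.prec (if t = 0 then ∅ else W (t - 1)) Z) (W t)) ∧
  ¬ ∃ Z, G.cond3 γ γ' T2 Z ∧ G.prec (if M = 0 then ∅ else W (M - 1)) Z

end NodalGraph

namespace NodalGraph

/-- A node is separating (disconnecting) if the curve becomes disconnected
after removing it (i.e. after normalizing at it). -/
def SeparatingNode (G : NodalGraph) (e : G.N) : Prop :=
  ¬ ∀ u v : G.V, Relation.ReflTransGen
      (fun a b => ∃ f, f ≠ e ∧ (G.ends f = (a, b) ∨ G.ends f = (b, a))) u v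

end NodalGraph

/-!
A node `R` joining `C_γ` and `C_γ'` is a terminal point of a subcurve `Z` exactly when `Z` contains
one of `γ, γ'` but not the other. A subcurve with `Term Z = {R}` is closed under paths avoiding `R`,
so if `R` is not separating no such subcurve exists and `T¹_γ = T¹_γ'`. If `R` is separating, a
connected `Z` with `Term Z = {R}` is determined by any one of its components, hence is `W` or `Wᶜ`;
the 1-tails lying in exactly one of `T¹_γ`, `T¹_γ'` are those with `Term Z = {R}` avoiding `σ(0)`,
and only `Wᶜ` qualifies.
-/

namespace NodalGraph

variable {G : NodalGraph}

def Joins (e : G.N) (a b : G.V) : Prop := G.ends e = (a, b) ∨ G.ends e = (b, a)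

def AdjAvoiding (R : G.N) (a b : G.V) : Prop := ∃ f, f ≠ R ∧ G.Joins f a b

lemma joins_of_onComp {e : G.N} {a b : G.V} (ha : G.onComp e a) (hb : G.onComp e b)
    (hab : a ≠ b) : G.Joins e a b := by
  unfold Joins
  rcases ha with ha | ha <;> rcases hb with hb | hb
  · exact absurd (ha.symm.trans hb) hab
  · exact Or.inl (Prod.ext ha hb)
  · exact Or.inr (Prod.ext hb ha)
  · exact absurd (ha.symm.trans hb) hab

lemma mem_Term {e : G.N} {Z : Finset G.V} :
    e ∈ G.Term Z ↔ ¬((G.ends e).1 ∈ Z ↔ (G.ends e).2 ∈ Z) := by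
  simp only [Term, mem_filter, mem_univ, true_and]
  tauto

lemma mem_Term_iff_of_joins {e : G.N} {a b : G.V} (h : G.Joins e a b) {Z : Finset G.V} :
    e ∈ G.Term Z ↔ ¬(a ∈ Z ↔ b ∈ Z) := by
  rw [mem_Term]
  rcases h with h | h
  · rw [h]
  · rw [h]; tauto

lemma Term_compl (Z : Finset G.V) : G.Term Zᶜ = G.Term Z := by
  ext e
  simp only [mem_Term, mem_compl]
  tauto

lemma Term_eq_singleton_of_mem {e : G.N} {Z : Finset G.V} (hk : G.k Z = 1)
    (he : e ∈ G.Term Z) : G.Term Z = {e} := by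
  obtain ⟨x, hx⟩ := card_eq_one.mp hk
  rw [hx, mem_singleton] at he
  rw [hx, he]

lemma IsKTail.compl {Z : Finset G.V} {m : ℕ} (hZ : G.IsKTail Z m) : G.IsKTail Zᶜ m := by
  obtain ⟨⟨-, hconn, hconnc⟩, hk⟩ := hZ
  refine ⟨⟨?_, hconnc, by rwa [compl_compl]⟩, by rwa [k, Term_compl]⟩
  obtain ⟨v, hv⟩ := hconn.1
  exact fun h => (mem_compl.mp (h ▸ mem_univ v)) hv

lemma mem_of_reflTransGen_adjAvoiding {R : G.N} {Z : Finset G.V} (hT : G.Term Z = {R})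
    {a b : G.V} (ha : a ∈ Z) (h : Relation.ReflTransGen (G.AdjAvoiding R) a b) : b ∈ Z := by
  induction h with
  | refl => exact ha
  | tail _ hstep ih =>
    obtain ⟨f, hfR, hf⟩ := hstep
    by_contra hd
    have hfT : f ∈ G.Term Z := (mem_Term_iff_of_joins hf).mpr (by tauto)
    exact hfR (by simpa [hT] using hfT)

lemma reflTransGen_adjAvoiding_of_connSub {R : G.N} {Z : Finset G.V} (hT : G.Term Z = {R})
    (hZ : G.ConnSub Z) {u v : G.V} (hu : u ∈ Z) (hv : v ∈ Z) :
    Relation.ReflTransGen (G.AdjAvoiding R) u v := by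
  refine Relation.ReflTransGen.mono (fun a b hab => ?_) _ _ (hZ.2 u hu v hv)
  obtain ⟨ha, hb, e, he⟩ := hab
  refine ⟨e, ?_, he⟩
  rintro rfl
  have hR : e ∈ G.Term Z := hT ▸ mem_singleton_self e
  exact (mem_Term_iff_of_joins he).mp hR (iff_of_true ha hb)

lemma eq_of_Term_eq_singleton {R : G.N} {Z Z' : Finset G.V}
    (hT : G.Term Z = {R}) (hT' : G.Term Z' = {R}) (hZ : G.ConnSub Z) (hZ' : G.ConnSub Z')
    {v : G.V} (hv : v ∈ Z) (hv' : v ∈ Z') : Z = Z' := by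
  ext u
  exact ⟨fun hu => mem_of_reflTransGen_adjAvoiding hT' hv'
      (reflTransGen_adjAvoiding_of_connSub hT hZ hv hu),
    fun hu => mem_of_reflTransGen_adjAvoiding hT hv
      (reflTransGen_adjAvoiding_of_connSub hT' hZ' hv' hu)⟩

lemma eq_or_eq_compl_of_Term_eq_singleton {R : G.N} {Z W : Finset G.V}
    (hTZ : G.Term Z = {R}) (hTW : G.Term W = {R}) (hZ : G.ConnSub Z) (hW : G.IsTail W) :
    Z = W ∨ Z = Wᶜ := by
  obtain ⟨v, hv⟩ := hZ.1
  by_cases hvW : v ∈ W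
  · exact Or.inl (eq_of_Term_eq_singleton hTZ hTW hZ hW.2.1 hv hvW)
  · exact Or.inr (eq_of_Term_eq_singleton hTZ ((Term_compl W).trans hTW) hZ hW.2.2 hv
      (mem_compl.mpr hvW))

lemma Term_ne_singleton_of_not_separating {R : G.N} (hR : ¬ G.SeparatingNode R)
    (Z : Finset G.V) : G.Term Z ≠ {R} := by
  intro hT
  have hpath : ∀ u v, Relation.ReflTransGen (G.AdjAvoiding R) u v := not_not.mp hR
  have hRZ : ¬((G.ends R).1 ∈ Z ↔ (G.ends R).2 ∈ Z) := mem_Term.mp (hT ▸ mem_singleton_self R)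
  exact hRZ ⟨fun h => mem_of_reflTransGen_adjAvoiding hT h (hpath _ _),
    fun h => mem_of_reflTransGen_adjAvoiding hT h (hpath _ _)⟩

lemma T1_eq_of_not_separating {R : G.N} {a b : G.V} (hab : G.Joins R a b)
    (hR : ¬ G.SeparatingNode R) : G.T1 a = G.T1 b := by
  ext Z
  suffices hZ : G.IsKTail Z 1 → (a ∈ Z ↔ b ∈ Z) by
    simp only [T1, Set.mem_ofPred_eq]
    constructor <;> rintro ⟨h1, hmem, hbase⟩ <;> exact ⟨h1, by simp_all, hbase⟩
  intro hZ
  by_contra hne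
  exact Term_ne_singleton_of_not_separating hR Z
    (Term_eq_singleton_of_mem hZ.2 ((mem_Term_iff_of_joins hab).mpr hne))

lemma mem_symmDiff_T1_iff {R : G.N} {a b : G.V} (hab : G.Joins R a b) {Z : Finset G.V} :
    Z ∈ symmDiff (G.T1 a) (G.T1 b) ↔ G.IsKTail Z 1 ∧ G.base ∉ Z ∧ R ∈ G.Term Z := by
  rw [mem_Term_iff_of_joins hab, Set.mem_symmDiff]
  simp only [T1, Set.mem_ofPred_eq]
  tauto

lemma symmDiff_T1_eq_of_Term_eq_singleton {R : G.N} {a b : G.V} (hab : G.Joins R a b)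
    {W : Finset G.V} (hW : G.IsKTail W 1) (hTW : G.Term W = {R}) (hbase : G.base ∈ W) :
    symmDiff (G.T1 a) (G.T1 b) = {Wᶜ} := by
  ext Z
  rw [mem_symmDiff_T1_iff hab, Set.mem_singleton_iff]
  constructor
  · rintro ⟨hZ, hbaseZ, hRZ⟩
    rcases eq_or_eq_compl_of_Term_eq_singleton (Term_eq_singleton_of_mem hZ.2 hRZ) hTW
        hZ.1.2.1 hW.1 with rfl | rfl
    · exact absurd hbase hbaseZ
    · rfl
  · rintro rfl
    exact ⟨hW.compl, notMem_compl.mpr hbase, by rw [Term_compl, hTW]; exact mem_singleton_self R⟩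

end NodalGraph

theorem T1_comparison_at_node_general
    (G : NodalGraph) (R : G.N) (γ γ' : G.V)
    (hγγ' : γ ≠ γ') (hR : G.onComp R γ ∧ G.onComp R γ') :
    (¬ G.SeparatingNode R → G.T1 γ = G.T1 γ') ∧
    (G.SeparatingNode R → ∀ W : Finset G.V,
      G.IsKTail W 1 → G.Term W = {R} → G.base ∈ W →
      symmDiff (G.T1 γ) (G.T1 γ') = {Wᶜ}) := by
  have hjoins : G.Joins R γ γ' := NodalGraph.joins_of_onComp hR.1 hR.2 hγγ'
  exact ⟨NodalGraph.T1_eq_of_not_separating hjoins,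
    fun _ _ => NodalGraph.symmDiff_T1_eq_of_Term_eq_singleton hjoins⟩

/-- from the proof of Lemma 6.1: for a node `R ∈ C_γ ∩ C_{γ'}`
with `γ ≠ γ'`: if `R` is not separating then `T¹_γ = T¹_{γ'}`; if `R` is
separating and `W` is the 1-tail terminating at `R` and containing `σ(0)`, then
`T¹_γ` and `T¹_{γ'}` differ exactly by the single tail `Wᶜ` (the tail `W` read
on the side not containing `σ(0)`). -/
theorem T1_comparison_at_node
    (G : NodalGraph) (hconn : G.Connected) (R : G.N) (γ γ' : G.V)
    (hγγ' : γ ≠ γ') (hR : G.onComp R γ ∧ G.onComp R γ') :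
    (¬ G.SeparatingNode R → G.T1 γ = G.T1 γ') ∧
    (G.SeparatingNode R → ∀ W : Finset G.V,
      G.IsKTail W 1 → G.Term W = {R} → G.base ∈ W →
      symmDiff (G.T1 γ) (G.T1 γ') = {Wᶜ}) :=
  T1_comparison_at_node_general G R γ γ' hγγ' hR
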